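/- In the parity tree, let m be a node at level ℓ+1 ≥ 2, and let α, β range over nodes at levels ≤ ℓ. The product b_m·b_α·b_β is identically 1 if and only if {α, β} = {c_1[m], c_2[m]} (the two children of m). -/

import Mathlib

/-!
A product of `±1` parities is identically `1` exactly when every input bit lies in an even number
of the three supports (test against the assignment with a single `-1`), i.e. when
`supp m = supp α ∆ supp β`. The leaves below a node of level `ℓ + 1` are a fiber of
`k ↦ k / 2 ^ ℓ`, of size `2 ^ ℓ`, while the supports of `α` and `β` have at most `2 ^ (ℓ - 1)`
elements each. So the symmetric difference can only cover `supp m` if both have exactly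
`2 ^ (ℓ - 1)` elements and are disjoint; being fibers of `k ↦ k / 2 ^ (ℓ - 1)` inside `supp m`,
they are then its two halves.
-/

open Finset
open scoped symmDiff

section SignProducts

variable {ι M : Type*}

theorem prod_mul_self_eq_one [CommMonoid M] {b : ι → M} (hb : ∀ j, b j * b j = 1)
    (s : Finset ι) : (∏ j ∈ s, b j) * ∏ j ∈ s, b j = 1 := by
  rw [← prod_mul_distrib]
  exact prod_eq_one fun j _ => hb j

theorem prod_symmDiff_of_mul_self_eq_one [DecidableEq ι] [CommMonoid M] {b : ι → M}
    (hb : ∀ j, b j * b j = 1) (s t : Finset ι) :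
    ∏ j ∈ s ∆ t, b j = (∏ j ∈ s, b j) * ∏ j ∈ t, b j := by
  rw [← prod_union_inter, ← prod_sdiff (inter_subset_union (s := s) (t := t)), mul_assoc,
    prod_mul_self_eq_one hb, mul_one, symmDiff_eq_sup_sdiff_inf]
  rfl

theorem forall_sign_prod_mul_prod_mul_prod_eq_one_iff [DecidableEq ι] {R : Type*} [CommRing R]
    (hR : (-1 : R) ≠ 1) (s t u : Finset ι) :
    (∀ b : ι → R, (∀ j, b j = 1 ∨ b j = -1) →
        (∏ j ∈ s, b j) * (∏ j ∈ t, b j) * (∏ j ∈ u, b j) = 1) ↔ s = t ∆ u := by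
  constructor
  · intro h
    ext j
    have hj := h (fun i => if i = j then -1 else 1) fun i => by split_ifs <;> simp
    simp only [prod_ite_eq', mem_symmDiff] at hj ⊢
    split_ifs at hj <;> simp_all
  · rintro rfl b hb
    have hsq : ∀ j, b j * b j = 1 := fun j => by rcases hb j with h | h <;> simp [h]
    rw [prod_symmDiff_of_mul_self_eq_one hsq, mul_assoc, mul_mul_mul_comm,
      prod_mul_self_eq_one hsq, prod_mul_self_eq_one hsq, one_mul]

end SignProducts

def divFiber (N d i : ℕ) : Finset (Fin N) := univ.filter fun k => (k : ℕ) / d = i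

namespace divFiber

variable {N d i : ℕ}

@[simp]
theorem mem_iff {k : Fin N} : k ∈ divFiber N d i ↔ (k : ℕ) / d = i := by
  simp [divFiber]

theorem map_valEmbedding (hd : 0 < d) :
    (divFiber N d i).map Fin.valEmbedding = range N ∩ Ico (i * d) (i * d + d) := by
  ext k
  simp only [mem_map, mem_iff, Fin.valEmbedding_apply, mem_inter, mem_range, mem_Ico,
    Nat.div_eq_iff hd]
  constructor
  · rintro ⟨k, hk, rfl⟩
    exact ⟨k.isLt, by omega⟩
  · rintro ⟨hkN, hk⟩
    exact ⟨⟨k, hkN⟩, by simp only; omega, rfl⟩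

theorem card_le (hd : 0 < d) : #(divFiber N d i) ≤ d := by
  rw [← card_map Fin.valEmbedding, map_valEmbedding hd]
  exact (card_le_card inter_subset_right).trans (by simp)

theorem card_eq (hd : 0 < d) (hN : (i + 1) * d ≤ N) : #(divFiber N d i) = d := by
  rw [← card_map Fin.valEmbedding, map_valEmbedding hd, inter_eq_right.2]
  · simp
  · intro k hk
    simp only [mem_Ico, mem_range] at hk ⊢
    nlinarith

theorem mul_two_eq_symmDiff (N d i : ℕ) :
    divFiber N (d * 2) i = divFiber N d (2 * i) ∆ divFiber N d (2 * i + 1) := by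
  rw [symmDiff_eq_union]
  · ext k
    simp only [mem_union, mem_iff, ← Nat.div_div_eq_div_mul]
    omega
  · exact disjoint_left.2 fun k h1 h2 => by simp only [mem_iff] at h1 h2; omega

theorem div_two_eq_of_subset {j : ℕ} (hne : (divFiber N d j).Nonempty)
    (hsub : divFiber N d j ⊆ divFiber N (d * 2) i) : j / 2 = i := by
  obtain ⟨k, hk⟩ := hne
  have hk' := hsub hk
  rw [mem_iff] at hk hk'
  rw [← hk, Nat.div_div_eq_div_mul, hk']

theorem mul_two_eq_symmDiff_iff {da db ia ib : ℕ} (hN : (i + 1) * (d * 2) ≤ N)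
    (hda : 0 < da) (hdb : 0 < db) (hdad : da ≤ d) (hdbd : db ≤ d) :
    divFiber N (d * 2) i = divFiber N da ia ∆ divFiber N db ib ↔
      da = d ∧ db = d ∧ (ia = 2 * i ∧ ib = 2 * i + 1 ∨ ia = 2 * i + 1 ∧ ib = 2 * i) := by
  constructor
  · intro h
    set A := divFiber N da ia
    set B := divFiber N db ib
    have hP : #(A ∆ B) = d * 2 := h ▸ card_eq (by omega) hN
    have hAB : #(A ∆ B) ≤ #(A ∪ B) := card_le_card symmDiff_le_sup
    have hA : #A ≤ da := card_le hda
    have hB : #B ≤ db := card_le hdb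
    have hunion := card_union_le A B
    have hdisj : Disjoint A B := card_union_eq_card_add_card.1 (by omega)
    obtain rfl : d = da := by omega
    obtain rfl : db = d := by omega
    rw [symmDiff_eq_union hdisj] at h
    have hAne : A.Nonempty := card_pos.1 (by omega)
    have hBne : B.Nonempty := card_pos.1 (by omega)
    have hia := div_two_eq_of_subset hAne (h ▸ subset_union_left)
    have hib := div_two_eq_of_subset hBne (h ▸ subset_union_right)
    have hne : ia ≠ ib := by
      rintro rfl
      exact hAne.ne_empty (disjoint_self.1 hdisj)
    omega
  · rintro ⟨rfl, rfl, ⟨rfl, rfl⟩ | ⟨rfl, rfl⟩⟩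
    · exact mul_two_eq_symmDiff _ _ _
    · rw [symmDiff_comm]
      exact mul_two_eq_symmDiff _ _ _

end divFiber

theorem stmt_15_general (L n : ℕ) (leaf : Fin (2 ^ L) → Fin n)
    (hinj : Function.Injective leaf)
    (supp : ℕ → ℕ → Finset (Fin n))
    (hsupp : ∀ ℓ i, supp ℓ i = (Finset.univ.filter
        (fun j : Fin (2 ^ L) => (j : ℕ) / 2 ^ (ℓ - 1) = i)).image leaf)
    (ℓ : ℕ) (hℓL : ℓ ≤ L)
    (im : ℕ) (him : im < 2 ^ (L - ℓ))
    (ℓa ia ℓb ib : ℕ)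
    (hℓa1 : 1 ≤ ℓa) (hℓa2 : ℓa ≤ ℓ)
    (hℓb1 : 1 ≤ ℓb) (hℓb2 : ℓb ≤ ℓ) :
    (∀ b : Fin n → ℝ, (∀ j, b j = 1 ∨ b j = -1) →
        (∏ j ∈ supp (ℓ + 1) im, b j) * (∏ j ∈ supp ℓa ia, b j) *
          (∏ j ∈ supp ℓb ib, b j) = 1) ↔
      ({(ℓa, ia), (ℓb, ib)} : Set (ℕ × ℕ)) = {(ℓ, 2 * im), (ℓ, 2 * im + 1)} := by
  have hsupp' : ∀ ℓ i, supp ℓ i = (divFiber (2 ^ L) (2 ^ (ℓ - 1)) i).image leaf := hsupp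
  have hparent : 2 ^ (ℓ + 1 - 1) = 2 ^ (ℓ - 1) * 2 := by
    rw [← pow_succ]; congr 1; omega
  have hN : (im + 1) * (2 ^ (ℓ - 1) * 2) ≤ 2 ^ L := calc
    (im + 1) * (2 ^ (ℓ - 1) * 2) ≤ 2 ^ (L - ℓ) * 2 ^ ℓ := by
      rw [← hparent, Nat.add_sub_cancel]; exact Nat.mul_le_mul_right _ him
    _ = 2 ^ L := by rw [← pow_add, Nat.sub_add_cancel hℓL]
  have hpow_le {k : ℕ} (hk : k ≤ ℓ) : 2 ^ (k - 1) ≤ 2 ^ (ℓ - 1) :=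
    Nat.pow_le_pow_right two_pos (by omega)
  rw [forall_sign_prod_mul_prod_mul_prod_eq_one_iff (by norm_num), hsupp', hsupp', hsupp',
    ← image_symmDiff _ _ hinj, (image_injective hinj).eq_iff, hparent,
    divFiber.mul_two_eq_symmDiff_iff hN (by positivity) (by positivity) (hpow_le hℓa2)
      (hpow_le hℓb2), (Nat.pow_right_injective le_rfl).eq_iff,
    (Nat.pow_right_injective le_rfl).eq_iff, Set.pair_eq_pair_iff]
  simp only [Prod.mk.injEq]
  omega

/-- In the parity tree, for a node m at level ℓ+1 and nodes α = (ℓa, ia),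
β = (ℓb, ib) at levels ≤ ℓ, the product b_m·b_α·b_β is identically 1 (over all
±1 input assignments) iff {α, β} is exactly the pair of children of m. -/
theorem stmt_15 (L n : ℕ) (leaf : Fin (2 ^ L) → Fin n)
    (hinj : Function.Injective leaf)
    (supp : ℕ → ℕ → Finset (Fin n))
    (hsupp : ∀ ℓ i, supp ℓ i = (Finset.univ.filter
        (fun j : Fin (2 ^ L) => (j : ℕ) / 2 ^ (ℓ - 1) = i)).image leaf)
    (ℓ : ℕ) (hℓ : 1 ≤ ℓ) (hℓL : ℓ ≤ L)
    (im : ℕ) (him : im < 2 ^ (L - ℓ))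
    (ℓa ia ℓb ib : ℕ)
    (hℓa1 : 1 ≤ ℓa) (hℓa2 : ℓa ≤ ℓ) (hia : ia < 2 ^ (L + 1 - ℓa))
    (hℓb1 : 1 ≤ ℓb) (hℓb2 : ℓb ≤ ℓ) (hib : ib < 2 ^ (L + 1 - ℓb)) :
    (∀ b : Fin n → ℝ, (∀ j, b j = 1 ∨ b j = -1) →
        (∏ j ∈ supp (ℓ + 1) im, b j) * (∏ j ∈ supp ℓa ia, b j) *
          (∏ j ∈ supp ℓb ib, b j) = 1) ↔
      ({(ℓa, ia), (ℓb, ib)} : Set (ℕ × ℕ)) = {(ℓ, 2 * im), (ℓ, 2 * im + 1)} :=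
  stmt_15_general L n leaf hinj supp hsupp ℓ hℓL im him ℓa ia ℓb ib hℓa1 hℓa2 hℓb1 hℓb2
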